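/- arXiv:2505.03050 — 7 statements merged into one kernel-verified Lean document; each statement's English description precedes it below -/
import Mathlib

section
/- Let f : ℝⁿ → ℝ be C¹-smooth and let (x^k) ⊂ ℝⁿ be a sequence satisfying: (H1) there exists σ > 0 such that f(x^k) − f(x^{k+1}) ≥ σ‖∇f(x^k)‖·‖x^{k+1} − x^k‖ for all sufficiently large k, and (H2) for all sufficiently large k, f(x^{k+1}) = f(x^k) implies x^{k+1} = x^k. If x̄ is an accumulation point of (x^k) and f satisfies the PLK condition at x̄, then x^k → x̄ as k → ∞. -/
open Set Filter

/-- The Polyak–Łojasiewicz–Kurdyka (PLK) condition for `f` at `x₀`. -/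
def PLKCondition {n : ℕ} (f : EuclideanSpace ℝ (Fin n) → ℝ)
    (x₀ : EuclideanSpace ℝ (Fin n)) : Prop :=
  ∃ (η : ℝ) (U : Set (EuclideanSpace ℝ (Fin n))) (φ : ℝ → ℝ),
    0 < η ∧ U ∈ nhds x₀ ∧ φ 0 = 0 ∧
    (∀ t ∈ Set.Ico (0:ℝ) η, 0 ≤ φ t) ∧
    ConcaveOn ℝ (Set.Ico 0 η) φ ∧
    (∀ t ∈ Set.Ioo (0:ℝ) η, HasDerivAt φ (deriv φ t) t) ∧
    ContinuousOn (deriv φ) (Set.Ioo 0 η) ∧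
    (∀ t ∈ Set.Ioo (0:ℝ) η, 0 < deriv φ t) ∧
    ∀ x ∈ U, f x₀ < f x → f x < f x₀ + η →
      1 ≤ deriv φ (f x - f x₀) * ‖gradient f x‖

open Topology

/-!
By (H1) the values `f (x k)` eventually decrease, and they cluster at `f xb`, so they decrease to
`f xb`. If they reach `f xb`, (H2) freezes the sequence. Otherwise put `r k = f (x k) - f xb > 0`.
While `x k` stays in the PLK neighbourhood, (H1), the PLK inequality and the concavity of `φ` give
`σ ‖x (k+1) - x k‖ ≤ φ (r k) - φ (r (k+1))`. Telescoping bounds the length of the path after `k₀`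
by `(φ (r k₀) - inf φ) / σ`, which is small once `k₀` is large and `x k₀` is close to `xb`; so the
sequence never leaves the neighbourhood, has finite length, and converges to its cluster point.
-/

section AntitoneClusterPt

variable {α : Type*} [LinearOrder α] [TopologicalSpace α] [OrderTopology α]
  {u : ℕ → α} {a : α} {N : ℕ}

theorem AntitoneOn.le_of_mapClusterPt (hu : AntitoneOn u (Ici N)) (ha : MapClusterPt a atTop u)
    {k : ℕ} (hk : N ≤ k) : a ≤ u k := by
  by_contra! hlt
  obtain ⟨j, hj, hkj⟩ := ((ha.frequently (Ioi_mem_nhds hlt)).and_eventually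
    (eventually_ge_atTop k)).exists
  exact (hu hk (hk.trans hkj) hkj).not_gt hj

theorem AntitoneOn.tendsto_of_mapClusterPt (hu : AntitoneOn u (Ici N))
    (ha : MapClusterPt a atTop u) : Tendsto u atTop (𝓝 a) := by
  refine tendsto_order.2 ⟨fun b hb => ?_, fun b hb => ?_⟩
  · filter_upwards [eventually_ge_atTop N] with k hk
    exact hb.trans_le (hu.le_of_mapClusterPt ha hk)
  · obtain ⟨K, hK, hNK⟩ := ((ha.frequently (Iio_mem_nhds hb)).and_eventually
      (eventually_ge_atTop N)).exists
    filter_upwards [eventually_ge_atTop K] with k hk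
    exact (hu hNK (hNK.trans hk) hk).trans_lt hK

end AntitoneClusterPt

theorem cauchySeq_of_forall_ge_succ_eq {E : Type*} [PseudoMetricSpace E] {x : ℕ → E} {K : ℕ}
    (h : ∀ k ≥ K, x (k + 1) = x k) : CauchySeq x := by
  refine (tendsto_atTop_of_eventually_const (i₀ := K) (x := x K) fun k hk => ?_).cauchySeq
  induction k, hk using Nat.le_induction with
  | base => rfl
  | succ k hk ih => rw [h k hk, ih]

theorem summable_dist_of_dist_le_sub {E : Type*} [PseudoMetricSpace E] {x : ℕ → E} {Φ : ℕ → ℝ}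
    {xb : E} {ρ c : ℝ} {k₀ : ℕ} (hΦ : ∀ k ≥ k₀, c ≤ Φ k)
    (hstart : dist (x k₀) xb + (Φ k₀ - c) < ρ)
    (hstep : ∀ k ≥ k₀, x k ∈ Metric.ball xb ρ → dist (x k) (x (k + 1)) ≤ Φ k - Φ (k + 1)) :
    Summable fun k => dist (x k) (x (k + 1)) := by
  set d := fun j => dist (x (k₀ + j)) (x (k₀ + j + 1))
  have hlength : ∀ m, ∑ j ∈ Finset.range m, d j ≤ Φ k₀ - Φ (k₀ + m) := by
    intro m
    induction m with
    | zero => simp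
    | succ m ih =>
      have hball : x (k₀ + m) ∈ Metric.ball xb ρ := by
        have hpath : dist (x k₀) (x (k₀ + m)) ≤ ∑ j ∈ Finset.range m, d j :=
          dist_le_range_sum_dist (fun i => x (k₀ + i)) m
        have := hΦ (k₀ + m) (Nat.le_add_right k₀ m)
        rw [Metric.mem_ball]
        linarith [dist_triangle (x (k₀ + m)) (x k₀) xb, dist_comm (x (k₀ + m)) (x k₀)]
      have := hstep (k₀ + m) (Nat.le_add_right k₀ m) hball
      rw [Finset.sum_range_succ, ← add_assoc]
      linarith
  have htail : Summable d :=
    summable_of_sum_range_le (fun _ => dist_nonneg) fun m =>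
      (hlength m).trans (sub_le_sub_left (hΦ _ (Nat.le_add_right k₀ m)) _)
  exact (summable_nat_add_iff k₀).1 (by simpa only [add_comm _ k₀] using htail)

theorem ConcaveOn.deriv_mul_sub_le {S : Set ℝ} {φ : ℝ → ℝ} {φ' s t : ℝ} (hφ : ConcaveOn ℝ S φ)
    (ht : t ∈ S) (hs : s ∈ S) (hts : t ≤ s) (hd : HasDerivAt φ φ' s) :
    φ' * (s - t) ≤ φ s - φ t := by
  rcases hts.eq_or_lt with rfl | hlt
  · simp
  have := hφ.le_slope_of_hasDerivAt ht hs hlt hd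
  rwa [slope_def_field, le_div_iff₀ (sub_pos.2 hlt)] at this

theorem mul_le_sub_of_desingularizing {φ : ℝ → ℝ} {η φ' r r' g d σ : ℝ}
    (hφ : ConcaveOn ℝ (Ico 0 η) φ) (hr : r ∈ Ioo 0 η) (hr' : 0 ≤ r')
    (hφ' : HasDerivAt φ φ' r) (hKL : 1 ≤ φ' * g)
    (hσ : 0 ≤ σ) (hg : 0 ≤ g) (hd : 0 ≤ d) (hdesc : σ * (g * d) ≤ r - r') :
    σ * d ≤ φ r - φ r' := by
  have hφ'_nonneg : 0 ≤ φ' := by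
    by_contra! h
    nlinarith
  have hr'r : r' ≤ r := by nlinarith [mul_nonneg hσ (mul_nonneg hg hd)]
  calc σ * d ≤ (φ' * g) * (σ * d) := le_mul_of_one_le_left (mul_nonneg hσ hd) hKL
    _ = φ' * (σ * (g * d)) := by ring
    _ ≤ φ' * (r - r') := mul_le_mul_of_nonneg_left hdesc hφ'_nonneg
    _ ≤ φ r - φ r' :=
      hφ.deriv_mul_sub_le ⟨hr', hr'r.trans_lt hr.2⟩ (Ioo_subset_Ico_self hr) hr'r hφ'

theorem summable_dist_of_PLKCondition {n : ℕ} {f : EuclideanSpace ℝ (Fin n) → ℝ}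
    {x : ℕ → EuclideanSpace ℝ (Fin n)} {xb : EuclideanSpace ℝ (Fin n)} {σ : ℝ} {N : ℕ}
    (hσ : 0 < σ)
    (hdesc : ∀ k ≥ N, σ * (‖gradient f (x k)‖ * ‖x (k + 1) - x k‖) ≤ f (x k) - f (x (k + 1)))
    (habove : ∀ k ≥ N, f xb < f (x k)) (hlim : Tendsto (fun k => f (x k)) atTop (𝓝 (f xb)))
    (hacc : MapClusterPt xb atTop x) (hPLK : PLKCondition f xb) :
    Summable fun k => dist (x k) (x (k + 1)) := by
  obtain ⟨η, U, φ, hη, hU, -, hφ_nonneg, hφ_concave, hφ_deriv, -, hφ_deriv_pos, hKL⟩ := hPLK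
  obtain ⟨ρ, hρ, hball⟩ := Metric.mem_nhds_iff.1 hU
  set r : ℕ → ℝ := fun k => f (x k) - f xb
  set c := sInf (φ '' Ioo 0 η)
  have hφ_mono : MonotoneOn φ (Ioo 0 η) :=
    (strictMonoOn_of_deriv_pos (convex_Ioo 0 η)
      (fun t ht => (hφ_deriv t ht).continuousAt.continuousWithinAt)
      (fun t ht => hφ_deriv_pos t (by rwa [interior_Ioo] at ht))).monotoneOn
  have hφ_bdd : BddBelow (φ '' Ioo 0 η) :=
    ⟨0, forall_mem_image.2 fun t ht => hφ_nonneg t (Ioo_subset_Ico_self ht)⟩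
  have hr : Tendsto r atTop (𝓝[>] 0) := by
    refine tendsto_nhdsWithin_iff.2 ⟨?_, ?_⟩
    · simpa [r] using hlim.sub_const (f xb)
    · filter_upwards [eventually_ge_atTop N] with k hk
      exact sub_pos.2 (habove k hk)
  -- `φ` need not be continuous at `0`: `φ (r k)` tends to the infimum `c` of `φ` on `(0, η)`,
  -- not to `φ 0`.
  have hφr : Tendsto (fun k => φ (r k)) atTop (𝓝 c) :=
    (hφ_mono.tendsto_nhdsWithin_Ioo_right (nonempty_Ioo.2 hη) hφ_bdd).comp hr
  obtain ⟨K, hK⟩ := eventually_atTop.1 <|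
    (eventually_ge_atTop N).and <| ((tendsto_nhdsWithin_iff.1 hr).1.eventually
      (eventually_lt_nhds hη)).and (hφr.eventually (eventually_lt_nhds
        (lt_add_of_pos_right c (mul_pos hσ (half_pos hρ)))))
  obtain ⟨k₀, hk₀, hKk₀⟩ :=
    ((hacc.frequently (Metric.ball_mem_nhds xb (half_pos hρ))).and_eventually
      (eventually_ge_atTop K)).exists
  have hN : ∀ k ≥ k₀, N ≤ k := fun k hk => (hK k (hKk₀.trans hk)).1
  have hr_mem : ∀ k ≥ k₀, r k ∈ Ioo 0 η := fun k hk =>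
    ⟨sub_pos.2 (habove k (hN k hk)), (hK k (hKk₀.trans hk)).2.1⟩
  refine summable_dist_of_dist_le_sub (Φ := fun k => φ (r k) / σ) (c := c / σ) (xb := xb)
    (ρ := ρ) (k₀ := k₀) (fun k hk => ?_) ?_ (fun k hk hxk => ?_)
  · exact div_le_div_of_nonneg_right (csInf_le hφ_bdd (mem_image_of_mem φ (hr_mem k hk))) hσ.le
  · have hφ_start : (φ (r k₀) - c) / σ < ρ / 2 := by
      rw [div_lt_iff₀ hσ]
      linarith [(hK k₀ hKk₀).2.2]
    rw [← sub_div]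
    linarith [Metric.mem_ball.1 hk₀]
  · have hstep := mul_le_sub_of_desingularizing hφ_concave (hr_mem k hk)
      (hr_mem (k + 1) (hk.trans k.le_succ)).1.le (hφ_deriv _ (hr_mem k hk))
      (hKL (x k) (hball hxk) (habove k (hN k hk)) (by linarith [(hr_mem k hk).2]))
      hσ.le (norm_nonneg _) (norm_nonneg _) ((hdesc k (hN k hk)).trans_eq (by ring))
    rw [← sub_div, le_div_iff₀ hσ, dist_eq_norm']
    linarith

/-- Abadie–Mahony–Andrews-type convergence: if a sequence of iterates for a `C¹` function `f`
satisfies the primary descent condition (H1) and the complementary descent condition (H2),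
`xb` is an accumulation point of the sequence, and `f` satisfies the PLK condition at `xb`,
then the whole sequence converges to `xb`. -/
theorem convergence_of_descent_conditions_PLK {n : ℕ}
    (f : EuclideanSpace ℝ (Fin n) → ℝ) (hf : ContDiff ℝ 1 f)
    (x : ℕ → EuclideanSpace ℝ (Fin n))
    (H1 : ∃ σ > (0:ℝ), ∃ N : ℕ, ∀ k ≥ N,
      σ * (‖gradient f (x k)‖ * ‖x (k+1) - x k‖) ≤ f (x k) - f (x (k+1)))
    (H2 : ∃ N : ℕ, ∀ k ≥ N, f (x (k+1)) = f (x k) → x (k+1) = x k)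
    (xb : EuclideanSpace ℝ (Fin n))
    (hacc : MapClusterPt xb atTop x)
    (hPLK : PLKCondition f xb) :
    Tendsto x atTop (nhds xb) := by
  obtain ⟨σ, hσ, N₁, hdesc⟩ := H1
  obtain ⟨N₂, hH2⟩ := H2
  have hanti : AntitoneOn (fun k => f (x k)) (Ici N₁) :=
    antitoneOn_nat_Ici_of_succ_le fun k hk => sub_nonneg.1 <|
      (mul_nonneg hσ.le (mul_nonneg (norm_nonneg _) (norm_nonneg _))).trans (hdesc k hk)
  have hfacc : MapClusterPt (f xb) atTop (fun k => f (x k)) :=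
    hacc.continuousAt_comp hf.continuous.continuousAt
  have hbelow : ∀ k ≥ N₁, f xb ≤ f (x k) := fun k hk => hanti.le_of_mapClusterPt hfacc hk
  suffices CauchySeq x from le_nhds_of_cauchy_adhp this hacc
  by_cases! hlevel : ∃ K ≥ max N₁ N₂, f (x K) = f xb
  · obtain ⟨K, hK, hfK⟩ := hlevel
    have hflat : ∀ k ≥ K, f (x k) = f xb := fun k hk =>
      (hanti (mem_Ici.2 (le_of_max_le_left hK)) (mem_Ici.2 (le_of_max_le_left (hK.trans hk))) hk
        |>.trans_eq hfK).antisymm (hbelow k (le_of_max_le_left (hK.trans hk)))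
    exact cauchySeq_of_forall_ge_succ_eq fun k hk => hH2 k (le_of_max_le_right (hK.trans hk))
      ((hflat (k + 1) (hk.trans k.le_succ)).trans (hflat k hk).symm)
  · exact cauchySeq_of_summable_dist <| summable_dist_of_PLKCondition (N := max N₁ N₂) hσ
      (fun k hk => hdesc k (le_of_max_le_left hk))
      (fun k hk => (hbelow k (le_of_max_le_left hk)).lt_of_ne (hlevel k hk).symm)
      (hanti.tendsto_of_mapClusterPt hfacc) hacc hPLK
end

section
/- Let Ω ⊆ ℝⁿ be open and convex, let f : Ω → ℝ be differentiable with Lipschitz continuous gradient on Ω, let x̄ ∈ Ω, and let (x^k) ⊂ Ω be a sequence converging to x̄ such that there exists α > 0 with α‖∇f(x^k)‖² ≤ f(x^k) − f(x^{k+1}) for all sufficiently large k. Then: (i) if x^k → x̄ linearly (there exist C > 0 and c ∈ (0,1) with ‖x^k − x̄‖ ≤ C·c^k), then f(x^k) → f(x̄) linearly and ‖∇f(x^k)‖ → 0 linearly; (ii) more generally, if ‖x^k − x̄‖ ≤ C·m(k) for a nonincreasing sequence m(k) ↓ 0 and all large k, then there exists C′ > 0 with |f(x^k) − f(x̄)|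 ≤ C′·m(k)² and ‖∇f(x^k)‖ ≤ C′·m(k) for all large k. -/
open Set Filter

/-- Convergence rates of function values and gradients deduced from convergence rates of the
iterates, for functions with Lipschitz continuous gradient on an open convex set, under the
sufficient decrease condition `α‖∇f(xᵏ)‖² ≤ f(xᵏ) - f(xᵏ⁺¹)`. -/
theorem rates_transfer_from_iterates {n : ℕ}
    (Ω : Set (EuclideanSpace ℝ (Fin n))) (hΩopen : IsOpen Ω) (hΩconv : Convex ℝ Ω)
    (f : EuclideanSpace ℝ (Fin n) → ℝ)
    (hdiff : ∀ x ∈ Ω, DifferentiableAt ℝ f x)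
    (L : ℝ) (hL : 0 < L)
    (hlip : ∀ x ∈ Ω, ∀ y ∈ Ω, ‖gradient f x - gradient f y‖ ≤ L * ‖x - y‖)
    (xb : EuclideanSpace ℝ (Fin n)) (hxb : xb ∈ Ω)
    (x : ℕ → EuclideanSpace ℝ (Fin n)) (hxΩ : ∀ k, x k ∈ Ω)
    (hconv : Tendsto x atTop (nhds xb))
    (α : ℝ) (hα : 0 < α)
    (hdec : ∃ N : ℕ, ∀ k ≥ N, α * ‖gradient f (x k)‖^2 ≤ f (x k) - f (x (k+1))) :
    -- (i) linear convergence transfers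
    ((∃ C > (0:ℝ), ∃ c ∈ Set.Ioo (0:ℝ) 1, ∀ k : ℕ, ‖x k - xb‖ ≤ C * c ^ k) →
      ∃ C' > (0:ℝ), ∃ c' ∈ Set.Ioo (0:ℝ) 1, ∀ k : ℕ,
        |f (x k) - f xb| ≤ C' * c' ^ k ∧ ‖gradient f (x k)‖ ≤ C' * c' ^ k) ∧
    -- (ii) general rates transfer
    (∀ (m : ℕ → ℝ) (C : ℝ), 0 < C → Antitone m → (∀ k, 0 ≤ m k) →
      Tendsto m atTop (nhds 0) →
      (∃ N : ℕ, ∀ k ≥ N, ‖x k - xb‖ ≤ C * m k) →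
      ∃ C' > (0:ℝ), ∃ N : ℕ, ∀ k ≥ N,
        |f (x k) - f xb| ≤ C' * (m k)^2 ∧ ‖gradient f (x k)‖ ≤ C' * m k) := by
  classical
  obtain ⟨N₀, hN₀⟩ := hdec
  -- f is continuous at xb, hence f(x k) → f xb
  have hfc : ContinuousAt f xb := (hdiff xb hxb).continuousAt
  have hfx : Tendsto (fun k => f (x k)) atTop (nhds (f xb)) :=
    hfc.tendsto.comp hconv
  have hfx1 : Tendsto (fun k => f (x (k+1))) atTop (nhds (f xb)) :=
    hfx.comp (tendsto_add_atTop_nat 1)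
  have hdiff0 : Tendsto (fun k => f (x k) - f (x (k+1))) atTop (nhds 0) := by
    have := hfx.sub hfx1
    simpa using this
  -- squeeze: α‖grad‖² → 0
  have hsq : Tendsto (fun k => α * ‖gradient f (x k)‖^2) atTop (nhds 0) := by
    apply squeeze_zero' (Eventually.of_forall fun k => by positivity)
    · filter_upwards [eventually_ge_atTop N₀] with k hk
      exact hN₀ k hk
    · exact hdiff0
  have hsq2 : Tendsto (fun k => ‖gradient f (x k)‖^2) atTop (nhds 0) := by
    have := hsq.const_mul (1/α)
    simpa [mul_assoc, one_div, inv_mul_cancel_left₀ hα.ne'] using this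
  have hgn : Tendsto (fun k => ‖gradient f (x k)‖) atTop (nhds 0) := by
    have hs := hsq2.sqrt
    simp only [Real.sqrt_zero] at hs
    convert hs using 2 with k
    rw [Real.sqrt_sq (norm_nonneg _)]
  have hxn : Tendsto (fun k => ‖x k - xb‖) atTop (nhds 0) := by
    have := tendsto_iff_norm_sub_tendsto_zero.mp hconv
    simpa using this
  -- gradient at xb is 0
  have hgrad0 : gradient f xb = 0 := by
    have hb : Tendsto (fun k => ‖gradient f (x k)‖ + L * ‖x k - xb‖) atTop (nhds 0) := by
      have := hgn.add (hxn.const_mul L)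
      simpa using this
    have hle : ∀ k, ‖gradient f xb‖ ≤ ‖gradient f (x k)‖ + L * ‖x k - xb‖ := by
      intro k
      have h1 : ‖gradient f xb - gradient f (x k)‖ ≤ L * ‖x k - xb‖ := by
        have := hlip (x k) (hxΩ k) xb hxb
        rwa [norm_sub_rev] at this
      calc ‖gradient f xb‖ ≤ ‖gradient f (x k)‖ + ‖gradient f xb - gradient f (x k)‖ := by
            have := norm_add_le (gradient f (x k)) (gradient f xb - gradient f (x k))
            simpa using this
        _ ≤ ‖gradient f (x k)‖ + L * ‖x k - xb‖ := by linarith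
    have : ‖gradient f xb‖ ≤ 0 := ge_of_tendsto' hb hle
    exact norm_eq_zero.mp (le_antisymm this (norm_nonneg _))
  -- gradient bound
  have gradbound : ∀ y ∈ Ω, ‖gradient f y‖ ≤ L * ‖y - xb‖ := by
    intro y hy
    have := hlip y hy xb hxb
    rwa [hgrad0, sub_zero] at this
  -- relation between fderiv and gradient norms
  have fderiv_norm : ∀ z, ‖fderiv ℝ f z‖ = ‖gradient f z‖ := by
    intro z
    rw [show gradient f z = (InnerProductSpace.toDual ℝ _).symm (fderiv ℝ f z) from rfl]
    rw [LinearIsometryEquiv.norm_map]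
  -- descent-type bound
  have descent : ∀ y ∈ Ω, |f y - f xb| ≤ L * ‖y - xb‖^2 := by
    intro y hy
    have hseg : segment ℝ xb y ⊆ Ω := hΩconv.segment_subset hxb hy
    have hbound : ∀ z ∈ segment ℝ xb y,
        ‖fderiv ℝ f z - (0 : EuclideanSpace ℝ (Fin n) →L[ℝ] ℝ)‖ ≤ L * ‖y - xb‖ := by
      intro z hz
      rw [sub_zero, fderiv_norm]
      obtain ⟨a, b, ha, hb, hab, rfl⟩ := hz
      have hzmem : a • xb + b • y ∈ Ω := hseg ⟨a, b, ha, hb, hab, rfl⟩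
      have h1 : ‖gradient f (a • xb + b • y)‖ ≤ L * ‖(a • xb + b • y) - xb‖ :=
        gradbound _ hzmem
      have h2 : (a • xb + b • y) - xb = b • (y - xb) := by
        have : a = 1 - b := by linarith
        subst this
        module
      rw [h2, norm_smul] at h1
      refine h1.trans ?_
      have hb1 : b ≤ 1 := by linarith
      have : ‖b‖ = b := Real.norm_of_nonneg hb
      rw [this]
      have : b * ‖y - xb‖ ≤ ‖y - xb‖ := mul_le_of_le_one_left (norm_nonneg _) hb1
      exact mul_le_mul_of_nonneg_left this hL.le
    have hMVT := Convex.norm_image_sub_le_of_norm_hasFDerivWithin_le'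
      (f := f) (f' := fun z => fderiv ℝ f z) (φ := 0) (C := L * ‖y - xb‖)
      (s := segment ℝ xb y)
      (fun z hz => ((hdiff z (hseg hz)).hasFDerivAt).hasFDerivWithinAt)
      hbound (convex_segment _ _) (left_mem_segment ℝ xb y) (right_mem_segment ℝ xb y)
    simp only [ContinuousLinearMap.zero_apply, sub_zero, Real.norm_eq_abs] at hMVT
    calc |f y - f xb| ≤ L * ‖y - xb‖ * ‖y - xb‖ := hMVT
      _ = L * ‖y - xb‖^2 := by ring
  constructor
  · -- (i)
    rintro ⟨C, hC, c, ⟨hc0, hc1⟩, hlin⟩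
    refine ⟨L * C^2 + L * C, by positivity, c, ⟨hc0, hc1⟩, fun k => ?_⟩
    have hxk := hlin k
    have hck : (0:ℝ) < c ^ k := pow_pos hc0 k
    have hck1 : c ^ k ≤ 1 := pow_le_one₀ hc0.le hc1.le
    constructor
    · have h1 := descent (x k) (hxΩ k)
      have h2 : L * ‖x k - xb‖^2 ≤ L * (C * c ^ k)^2 := by
        apply mul_le_mul_of_nonneg_left _ hL.le
        exact pow_le_pow_left₀ (norm_nonneg _) hxk 2
      have h4 : (c ^ k)^2 ≤ c ^ k := by nlinarith
      have h3 : L * (C * c ^ k)^2 ≤ L * C^2 * c ^ k := by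
        have e : L * (C * c ^ k)^2 = L * C^2 * (c ^ k)^2 := by ring
        rw [e]
        exact mul_le_mul_of_nonneg_left h4 (by positivity)
      nlinarith [mul_pos (mul_pos hL hC) hck]
    · have h1 := gradbound (x k) (hxΩ k)
      have h2 : L * ‖x k - xb‖ ≤ L * (C * c ^ k) := by
        exact mul_le_mul_of_nonneg_left hxk hL.le
      nlinarith [mul_nonneg (mul_nonneg hL.le (sq_nonneg C)) hck.le]
  · -- (ii)
    rintro m C hC hmono hmnonneg hm0 ⟨N, hN⟩
    refine ⟨L * C^2 + L * C, by positivity, N, fun k hk => ?_⟩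
    have hxk := hN k hk
    have hmk := hmnonneg k
    constructor
    · have h1 := descent (x k) (hxΩ k)
      have h2 : L * ‖x k - xb‖^2 ≤ L * (C * m k)^2 := by
        apply mul_le_mul_of_nonneg_left _ hL.le
        exact pow_le_pow_left₀ (norm_nonneg _) hxk 2
      have : L * (C * m k)^2 = L * C^2 * (m k)^2 := by ring
      nlinarith [mul_pos hL hC, sq_nonneg (m k)]
    · have h1 := gradbound (x k) (hxΩ k)
      have h2 : L * ‖x k - xb‖ ≤ L * (C * m k) :=
        mul_le_mul_of_nonneg_left hxk hL.le
      nlinarith [mul_nonneg (mul_nonneg hL.le (sq_nonneg C)) hmk]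
end

section
/- Let (x^k), (x^k_in), (x^k_ex), (g^k) be IGDm iterates for a function f that is C¹ with L-Lipschitz gradient on an open convex set X ⊆ ℝⁿ, let x̄ ∈ X with ∇f(x̄) = 0, and suppose x^k, x^k_ex ∈ B(x̄,ρ) ⊆ X for all k = 1,…,K, where ρ > 0. Then for all k = 1,…,K one has ‖x^{k+1} − x^k‖ ≤ Lτρ/((1−β̄)(1−ν)) and, with z^k := (x^k, x^{k−1}), ‖z^{k+1} − z^k‖ ≤ √2·Lτρ/((1−β̄)(1−ν)). -/
open Set Filter

/-- Step-size bounds for IGDm iterates remaining in a ball around a stationary point: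
`‖xᵏ⁺¹ - xᵏ‖ ≤ Lτρ/((1-β̄)(1-ν))` and `‖zᵏ⁺¹ - zᵏ‖ ≤ √2·Lτρ/((1-β̄)(1-ν))` for
`k = 1, …, K`, where `zᵏ = (xᵏ, xᵏ⁻¹)` in the Euclidean product space (`WithLp 2`). -/
theorem IGDm_step_bounds_in_ball {n : ℕ}
    (X : Set (EuclideanSpace ℝ (Fin n))) (hXopen : IsOpen X) (hXconv : Convex ℝ X)
    (f : EuclideanSpace ℝ (Fin n) → ℝ)
    (hdiff : ∀ x ∈ X, DifferentiableAt ℝ f x)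
    (L : ℝ) (hL : 0 < L)
    (hlip : ∀ x ∈ X, ∀ y ∈ X, ‖gradient f x - gradient f y‖ ≤ L * ‖x - y‖)
    (τ ν βbar δbar : ℝ) (hτ : 0 < τ) (hν : ν ∈ Set.Ioo (0:ℝ) 1)
    (β γ : ℕ → ℝ) (hβnn : ∀ k, 0 ≤ β k) (hγnn : ∀ k, 0 ≤ γ k)
    (hβbar : ∀ k, β k ≤ βbar) (hβbar1 : βbar < 1)
    (hδbar : ∀ k, |β k - γ k| ≤ δbar)
    (x xin xex g : ℕ → EuclideanSpace ℝ (Fin n))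
    (hx01 : x 0 = x 1)
    (hxin : ∀ k, 1 ≤ k → xin k = x k + β k • (x k - x (k-1)))
    (hxex : ∀ k, 1 ≤ k → xex k = x k + γ k • (x k - x (k-1)))
    (hupd : ∀ k, 1 ≤ k → x (k+1) = xin k - τ • g k)
    (hg : ∀ k, 1 ≤ k → ‖g k - gradient f (xex k)‖ ≤ ν * ‖g k‖)
    (xb : EuclideanSpace ℝ (Fin n)) (hxbX : xb ∈ X) (hstat : gradient f xb = 0)
    (ρ : ℝ) (hρ : 0 < ρ) (hball : Metric.ball xb ρ ⊆ X)
    (K : ℕ)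
    (hmem : ∀ k, 1 ≤ k → k ≤ K → x k ∈ Metric.ball xb ρ ∧ xex k ∈ Metric.ball xb ρ) :
    ∀ k, 1 ≤ k → k ≤ K →
      ‖x (k+1) - x k‖ ≤ L * τ * ρ / ((1 - βbar) * (1 - ν)) ∧
      ∀ z : ℕ → WithLp 2 (EuclideanSpace ℝ (Fin n) × EuclideanSpace ℝ (Fin n)),
        z = (fun j => (WithLp.equiv 2 _).symm (x j, x (j-1))) →
        ‖z (k+1) - z k‖ ≤ Real.sqrt 2 * (L * τ * ρ) / ((1 - βbar) * (1 - ν)) := by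
  obtain ⟨hν0, hν1⟩ := hν
  have hβbar0 : 0 ≤ βbar := le_trans (hβnn 0) (hβbar 0)
  have h1β : 0 < 1 - βbar := by linarith
  have h1ν : 0 < 1 - ν := by linarith
  set M : ℝ := L * τ * ρ / ((1 - βbar) * (1 - ν)) with hMdef
  have hM0 : 0 ≤ M := by positivity
  -- bound on the inexact gradients
  have hgb : ∀ k, 1 ≤ k → k ≤ K → ‖g k‖ ≤ L * ρ / (1 - ν) := by
    intro k hk1 hkK
    have hxexmem := (hmem k hk1 hkK).2
    have hxexX : xex k ∈ X := hball hxexmem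
    have hgrad : ‖gradient f (xex k)‖ ≤ L * ρ := by
      have h := hlip (xex k) hxexX xb hxbX
      rw [hstat, sub_zero] at h
      have hd : ‖xex k - xb‖ ≤ ρ := by
        have := Metric.mem_ball.mp hxexmem
        rw [dist_eq_norm] at this
        linarith
      calc ‖gradient f (xex k)‖ ≤ L * ‖xex k - xb‖ := h
        _ ≤ L * ρ := by nlinarith
    have htri : ‖g k‖ ≤ ‖g k - gradient f (xex k)‖ + ‖gradient f (xex k)‖ := by
      have := norm_sub_le (g k - gradient f (xex k)) (- gradient f (xex k))
      simpa using this
    have h2 : (1 - ν) * ‖g k‖ ≤ L * ρ := by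
      have := hg k hk1
      nlinarith
    rw [le_div_iff₀ h1ν]
    linarith [mul_comm (1 - ν) ‖g k‖]
  -- main induction: ‖x (k+1) - x k‖ ≤ M for all k ≤ K
  have A : ∀ k, k ≤ K → ‖x (k+1) - x k‖ ≤ M := by
    intro k
    induction k with
    | zero => intro _; rw [zero_add, ← hx01, sub_self, norm_zero]; exact hM0
    | succ k ih =>
      intro hkK
      have hprev : ‖x (k+1) - x k‖ ≤ M := ih (le_trans (Nat.le_succ k) hkK)
      have hk1 : 1 ≤ k + 1 := Nat.succ_le_succ (Nat.zero_le k)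
      have hstep : x (k+1+1) - x (k+1) = β (k+1) • (x (k+1) - x k) - τ • g (k+1) := by
        rw [hupd (k+1) hk1, hxin (k+1) hk1]
        simp only [Nat.add_sub_cancel]
        abel
      have hgk := hgb (k+1) hk1 hkK
      have h1 : ‖x (k+1+1) - x (k+1)‖ ≤ β (k+1) * ‖x (k+1) - x k‖ + τ * ‖g (k+1)‖ := by
        rw [hstep]
        calc ‖β (k+1) • (x (k+1) - x k) - τ • g (k+1)‖
            ≤ ‖β (k+1) • (x (k+1) - x k)‖ + ‖τ • g (k+1)‖ := norm_sub_le _ _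
          _ = |β (k+1)| * ‖x (k+1) - x k‖ + |τ| * ‖g (k+1)‖ := by
              rw [norm_smul, norm_smul, Real.norm_eq_abs, Real.norm_eq_abs]
          _ = β (k+1) * ‖x (k+1) - x k‖ + τ * ‖g (k+1)‖ := by
              rw [abs_of_nonneg (hβnn (k+1)), abs_of_nonneg hτ.le]
      have h2 : β (k+1) * ‖x (k+1) - x k‖ ≤ βbar * M := by
        apply mul_le_mul (hβbar (k+1)) hprev (norm_nonneg _) hβbar0
      have h3 : τ * ‖g (k+1)‖ ≤ τ * (L * ρ / (1 - ν)) :=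
        mul_le_mul_of_nonneg_left hgk hτ.le
      have hkey : βbar * M + τ * (L * ρ / (1 - ν)) = M := by
        rw [hMdef]; field_simp; ring
      linarith
  intro k hk1 hkK
  have hA1 : ‖x (k+1) - x k‖ ≤ M := A k hkK
  have hA0 : ‖x k - x (k-1)‖ ≤ M := by
    have hk1K : k - 1 ≤ K := le_trans (Nat.sub_le k 1) hkK
    have := A (k-1) hk1K
    rwa [Nat.sub_add_cancel hk1] at this
  refine ⟨hA1, ?_⟩
  intro z hz
  subst hz
  have hfst : ((WithLp.equiv 2 (EuclideanSpace ℝ (Fin n) × EuclideanSpace ℝ (Fin n))).symm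
      (x (k+1), x (k+1-1)) - (WithLp.equiv 2 _).symm (x k, x (k-1))) =
      (WithLp.equiv 2 _).symm (x (k+1) - x k, x (k+1-1) - x (k-1)) := rfl
  have hnorm : ‖((WithLp.equiv 2 (EuclideanSpace ℝ (Fin n) × EuclideanSpace ℝ (Fin n))).symm
        (x (k+1), x (k+1-1)) - (WithLp.equiv 2 _).symm (x k, x (k-1)))‖
      = Real.sqrt (‖x (k+1) - x k‖^2 + ‖x (k+1-1) - x (k-1)‖^2) := by
    rw [hfst, WithLp.prod_norm_eq_of_L2]
    rfl
  simp only []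
  rw [hnorm]
  have hsimp : x (k+1-1) = x k := by norm_num
  rw [hsimp]
  have hle : Real.sqrt (‖x (k+1) - x k‖^2 + ‖x k - x (k-1)‖^2) ≤ Real.sqrt (2 * M^2) := by
    apply Real.sqrt_le_sqrt
    nlinarith [norm_nonneg (x (k+1) - x k), norm_nonneg (x k - x (k-1))]
  have h2M : Real.sqrt (2 * M^2) = Real.sqrt 2 * M := by
    rw [Real.sqrt_mul (by norm_num), Real.sqrt_sq hM0]
  have : Real.sqrt 2 * M = Real.sqrt 2 * (L * τ * ρ) / ((1 - βbar) * (1 - ν)) := by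
    rw [hMdef]; ring
  linarith [hle, h2M.le, h2M.ge]
end

section
/- Let (x^k), (x^k_in), (x^k_ex), (g^k) be IGDm iterates for a function f that is C¹ with L-Lipschitz gradient on an open convex set X ⊆ ℝⁿ, and suppose x^k → x̃ for some x̃ ∈ X. Then ∇f(x̃) = 0, and the sequences (x^k_in) and (x^k_ex) also converge to x̃. -/
open Set Filter

/-- If the IGDm iterates `xᵏ` converge to a point `x̃` of the underlying open convex set `X`,
then `x̃` is a stationary point of `f`, and the auxiliary sequences `xᵏ_in`, `xᵏ_ex`
converge to `x̃` as well. -/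
theorem IGDm_limit_is_stationary {n : ℕ}
    (X : Set (EuclideanSpace ℝ (Fin n))) (hXopen : IsOpen X) (hXconv : Convex ℝ X)
    (f : EuclideanSpace ℝ (Fin n) → ℝ)
    (hdiff : ∀ x ∈ X, DifferentiableAt ℝ f x)
    (L : ℝ) (hL : 0 < L)
    (hlip : ∀ x ∈ X, ∀ y ∈ X, ‖gradient f x - gradient f y‖ ≤ L * ‖x - y‖)
    (τ ν βbar δbar : ℝ) (hτ : 0 < τ) (hν : ν ∈ Set.Ioo (0:ℝ) 1)
    (β γ : ℕ → ℝ) (hβnn : ∀ k, 0 ≤ β k) (hγnn : ∀ k, 0 ≤ γ k)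
    (hβbar : ∀ k, β k ≤ βbar) (hβbar1 : βbar < 1)
    (hδbar : ∀ k, |β k - γ k| ≤ δbar)
    (x xin xex g : ℕ → EuclideanSpace ℝ (Fin n))
    (hx01 : x 0 = x 1)
    (hxin : ∀ k, 1 ≤ k → xin k = x k + β k • (x k - x (k-1)))
    (hxex : ∀ k, 1 ≤ k → xex k = x k + γ k • (x k - x (k-1)))
    (hupd : ∀ k, 1 ≤ k → x (k+1) = xin k - τ • g k)
    (hg : ∀ k, 1 ≤ k → ‖g k - gradient f (xex k)‖ ≤ ν * ‖g k‖)
    (xt : EuclideanSpace ℝ (Fin n)) (hxtX : xt ∈ X)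
    (hconv : Tendsto x atTop (nhds xt)) :
    gradient f xt = 0 ∧
    Tendsto xin atTop (nhds xt) ∧
    Tendsto xex atTop (nhds xt) := by
  -- x(k-1) and x(k+1) also converge to xt
  have hx' : Tendsto (fun k => x (k-1)) atTop (nhds xt) :=
    hconv.comp (tendsto_sub_atTop_nat 1)
  have hx1 : Tendsto (fun k => x (k+1)) atTop (nhds xt) :=
    hconv.comp (tendsto_add_atTop_nat 1)
  have hd : Tendsto (fun k => x k - x (k-1)) atTop
      (nhds (0 : EuclideanSpace ℝ (Fin n))) := by
    simpa using hconv.sub hx'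
  have hdn : Tendsto (fun k => ‖x k - x (k-1)‖) atTop (nhds 0) := by
    simpa using hd.norm
  -- bounded coefficient times vanishing sequence vanishes
  have key : ∀ (c : ℕ → ℝ) (C : ℝ), (∀ k, |c k| ≤ C) →
      Tendsto (fun k => c k • (x k - x (k-1))) atTop
        (nhds (0 : EuclideanSpace ℝ (Fin n))) := by
    intro c C hC
    refine squeeze_zero_norm (a := fun k => C * ‖x k - x (k-1)‖) (fun k => ?_) ?_
    · calc ‖c k • (x k - x (k-1))‖ = |c k| * ‖x k - x (k-1)‖ := by
            rw [norm_smul, Real.norm_eq_abs]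
        _ ≤ C * ‖x k - x (k-1)‖ :=
            mul_le_mul_of_nonneg_right (hC k) (norm_nonneg _)
    · simpa using hdn.const_mul C
  have hβb := key β βbar (fun k => by
    rw [abs_of_nonneg (hβnn k)]; exact hβbar k)
  have hγb := key γ (βbar + δbar) (fun k => by
    rw [abs_of_nonneg (hγnn k)]
    have h1 := (abs_le.mp (hδbar k)).1
    have h2 := hβbar k
    linarith)
  have hxinT : Tendsto xin atTop (nhds xt) := by
    have h1 : Tendsto (fun k => x k + β k • (x k - x (k-1))) atTop (nhds xt) := by
      simpa using hconv.add hβb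
    refine h1.congr' ?_
    filter_upwards [eventually_ge_atTop 1] with k hk
    exact (hxin k hk).symm
  have hxexT : Tendsto xex atTop (nhds xt) := by
    have h1 : Tendsto (fun k => x k + γ k • (x k - x (k-1))) atTop (nhds xt) := by
      simpa using hconv.add hγb
    refine h1.congr' ?_
    filter_upwards [eventually_ge_atTop 1] with k hk
    exact (hxex k hk).symm
  -- g tends to 0
  have hgT : Tendsto g atTop (nhds (0 : EuclideanSpace ℝ (Fin n))) := by
    have h1 : Tendsto (fun k => τ⁻¹ • (xin k - x (k+1))) atTop
        (nhds (0 : EuclideanSpace ℝ (Fin n))) := by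
      have := ((hxinT.sub hx1).const_smul τ⁻¹)
      simpa using this
    refine h1.congr' ?_
    filter_upwards [eventually_ge_atTop 1] with k hk
    have h2 : xin k - x (k+1) = τ • g k := by rw [hupd k hk]; abel
    rw [h2, smul_smul, inv_mul_cancel₀ hτ.ne', one_smul]
  have hgn : Tendsto (fun k => (1 + ν) * ‖g k‖) atTop (nhds 0) := by
    simpa using (hgT.norm.const_mul (1 + ν))
  -- gradient at xex tends to 0
  have hgradT : Tendsto (fun k => gradient f (xex k)) atTop
      (nhds (0 : EuclideanSpace ℝ (Fin n))) := by
    refine squeeze_zero_norm' ?_ hgn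
    filter_upwards [eventually_ge_atTop 1] with k hk
    have h1 : gradient f (xex k) = g k + (gradient f (xex k) - g k) := by abel
    calc ‖gradient f (xex k)‖ = ‖g k + (gradient f (xex k) - g k)‖ := by rw [← h1]
      _ ≤ ‖g k‖ + ‖gradient f (xex k) - g k‖ := norm_add_le _ _
      _ ≤ ‖g k‖ + ν * ‖g k‖ := by
          have := hg k hk
          rw [norm_sub_rev] at this
          linarith
      _ = (1 + ν) * ‖g k‖ := by ring
  -- gradient at xex tends to gradient at xt, by Lipschitz continuity
  have hgradT2 : Tendsto (fun k => gradient f (xex k)) atTop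
      (nhds (gradient f xt)) := by
    have hsub : Tendsto (fun k => gradient f (xex k) - gradient f xt) atTop
        (nhds (0 : EuclideanSpace ℝ (Fin n))) := by
      refine squeeze_zero_norm' (a := fun k => L * ‖xex k - xt‖) ?_ ?_
      · filter_upwards [hxexT.eventually (hXopen.mem_nhds hxtX)] with k hkX
        exact hlip _ hkX _ hxtX
      · have := (hxexT.sub (tendsto_const_nhds (x := xt))).norm.const_mul L
        simpa using this
    have := hsub.add (tendsto_const_nhds (x := gradient f xt))
    simpa using this
  have hfin : gradient f xt = 0 := tendsto_nhds_unique hgradT2 hgradT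
  exact ⟨hfin, hxinT, hxexT⟩
end

section
/- Let f : ℝⁿ → ℝ be C¹ with L-Lipschitz gradient on all of ℝⁿ, and let (x^k) be IGDm iterates with X = ℝⁿ and parameters satisfying max{Lτ, 2Lτδ̄ + (Lτ+1)β̄²} < 1 − ν. If inf_{k} f(x^k) > −∞, then ∇f(x^k) → 0 as k → ∞. -/
/-!
An `L`-Lipschitz gradient gives the two-sided descent bound
`|f y - f x - ⟪∇f x, y - x⟫| ≤ L/2 ‖y - x‖²`. Using it at the inertial point `xⁱⁿ` in both
directions, the relative error bound and the polarization identity for `xᵏ⁺¹ - xᵏ = βₖ dₖ - τ gᵏ`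
(with `dₖ = xᵏ - xᵏ⁻¹`), one step of IGDm decreases the energy
`Hₖ = 2τ f(xᵏ) + (1 - ν - Lτδ̄) ‖xᵏ - xᵏ⁻¹‖²` by at least
`τ²(1 - ν - Lτ) ‖gᵏ‖² + (1 - ν - 2Lτδ̄ - (Lτ + 1)β̄²) ‖xᵏ - xᵏ⁻¹‖²`.
Both coefficients are positive under the parameter condition, and `H` is bounded below,
so `gᵏ → 0` and `xᵏ - xᵏ⁻¹ → 0`; finally
`‖∇f(xᵏ)‖ ≤ L ‖xᵏ - xᵏ_ex‖ + (1 + ν) ‖gᵏ‖ ≤ L (β̄ + δ̄) ‖xᵏ - xᵏ⁻¹‖ + (1 + ν) ‖gᵏ‖`.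
-/

open Set Filter Topology
open scoped RealInnerProductSpace

theorem sub_sub_deriv_le_of_deriv_sub_le {φ φ' : ℝ → ℝ} {K : ℝ}
    (hφ : ∀ t, HasDerivAt φ (φ' t) t) (hφ' : ∀ t, 0 ≤ t → φ' t - φ' 0 ≤ K * t) :
    φ 1 - φ 0 - φ' 0 ≤ K / 2 := by
  set χ : ℝ → ℝ := fun t => φ t - t * φ' 0 - K / 2 * t ^ 2
  have hχ : ∀ t, HasDerivAt χ (φ' t - φ' 0 - K * t) t := fun t => by
    have h := ((hφ t).sub ((hasDerivAt_id t).mul_const (φ' 0))).sub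
      ((hasDerivAt_pow 2 t).const_mul (K / 2))
    exact h.congr_deriv (by push_cast; ring)
  have hanti : AntitoneOn χ (Ici 0) :=
    antitoneOn_of_hasDerivWithinAt_nonpos (convex_Ici 0)
      (fun t _ => (hχ t).continuousAt.continuousWithinAt)
      (fun t _ => (hχ t).hasDerivWithinAt)
      (fun t ht => by
        rw [interior_Ici] at ht
        linarith [hφ' t (le_of_lt ht)])
  have := hanti (mem_Ici.2 le_rfl) (show (1:ℝ) ∈ Ici 0 by norm_num) zero_le_one
  simp only [χ] at this
  linarith

theorem abs_sub_sub_deriv_le_of_abs_deriv_sub_le {φ φ' : ℝ → ℝ} {K : ℝ}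
    (hφ : ∀ t, HasDerivAt φ (φ' t) t) (hφ' : ∀ t, 0 ≤ t → |φ' t - φ' 0| ≤ K * t) :
    |φ 1 - φ 0 - φ' 0| ≤ K / 2 := by
  have upper := sub_sub_deriv_le_of_deriv_sub_le hφ fun t ht => (le_abs_self _).trans (hφ' t ht)
  have lower := sub_sub_deriv_le_of_deriv_sub_le (fun t => (hφ t).neg) fun t ht =>
    (neg_le_abs _).trans_eq' (by ring) |>.trans (hφ' t ht)
  simp only [Pi.neg_apply] at lower
  rw [abs_le]
  constructor <;> linarith

theorem tendsto_zero_of_add_le_of_bddBelow {H t : ℕ → ℝ} (hH : ∀ k, H (k + 1) + t k ≤ H k)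
    (ht : ∀ k, 0 ≤ t k) (hbdd : BddBelow (range H)) : Tendsto t atTop (𝓝 0) := by
  have hanti : Antitone H := antitone_nat_of_succ_le fun k => by linarith [hH k, ht k]
  have hlim := tendsto_atTop_ciInf hanti hbdd
  have hdiff : Tendsto (fun k => H k - H (k + 1)) atTop (𝓝 0) := by
    simpa using hlim.sub (hlim.comp (tendsto_add_atTop_nat 1))
  exact squeeze_zero ht (fun k => by linarith [hH k]) hdiff

theorem tendsto_zero_of_mul_sq_le {ι : Type*} {l : Filter ι} {u t : ι → ℝ} {c : ℝ} (hc : 0 < c)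
    (h : ∀ i, c * u i ^ 2 ≤ t i) (ht : Tendsto t l (𝓝 0)) : Tendsto u l (𝓝 0) := by
  refine squeeze_zero_norm (fun i => ?_) (by simpa using (ht.div_const c).sqrt)
  rw [Real.norm_eq_abs]
  exact Real.abs_le_sqrt (by rw [le_div_iff₀ hc]; linarith [h i])

section

variable {E : Type*} [NormedAddCommGroup E] [InnerProductSpace ℝ E] [CompleteSpace E]
  {f : E → ℝ} {L : ℝ}

theorem abs_sub_sub_inner_gradient_le (hf : Differentiable ℝ f)
    (hlip : ∀ x y, ‖gradient f x - gradient f y‖ ≤ L * ‖x - y‖) (x y : E) :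
    |f y - f x - ⟪gradient f x, y - x⟫| ≤ L / 2 * ‖y - x‖ ^ 2 := by
  set v := y - x
  have hline (t : ℝ) : HasDerivAt (fun s => f (x + s • v)) ⟪gradient f (x + t • v), v⟫ t := by
    have := (hf (x + t • v)).hasGradientAt.hasFDerivAt.comp_hasDerivAt t
      (((hasDerivAt_id t).smul_const v).const_add x)
    simpa [InnerProductSpace.toDual_apply_apply, Function.comp_def] using this
  have := abs_sub_sub_deriv_le_of_abs_deriv_sub_le hline (K := L * ‖v‖ ^ 2) fun t ht => by
    calc |⟪gradient f (x + t • v), v⟫ - ⟪gradient f (x + (0:ℝ) • v), v⟫|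
        = |⟪gradient f (x + t • v) - gradient f x, v⟫| := by
          rw [inner_sub_left, zero_smul, add_zero]
      _ ≤ ‖gradient f (x + t • v) - gradient f x‖ * ‖v‖ := abs_real_inner_le_norm _ _
      _ ≤ L * ‖t • v‖ * ‖v‖ := by gcongr; simpa using hlip (x + t • v) x
      _ = L * ‖v‖ ^ 2 * t := by rw [norm_smul, Real.norm_of_nonneg ht]; ring
  simpa [v, mul_div_right_comm] using this

theorem le_add_inner_gradient_add_norm_sq (hf : Differentiable ℝ f)
    (hlip : ∀ x y, ‖gradient f x - gradient f y‖ ≤ L * ‖x - y‖) (x y z : E) :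
    f z ≤ f x + ⟪gradient f y, z - x⟫ + L / 2 * (‖y - x‖ ^ 2 + ‖z - y‖ ^ 2) := by
  have hzy := abs_le.1 (abs_sub_sub_inner_gradient_le hf hlip y z)
  have hxy := abs_le.1 (abs_sub_sub_inner_gradient_le hf hlip y x)
  have hsplit : ⟪gradient f y, z - x⟫ = ⟪gradient f y, z - y⟫ - ⟪gradient f y, x - y⟫ := by
    rw [← inner_sub_right, sub_sub_sub_cancel_right]
  rw [norm_sub_rev y x]
  linarith [hzy.2, hxy.1]

theorem norm_gradient_le_of_norm_sub_gradient_le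
    (hlip : ∀ x y, ‖gradient f x - gradient f y‖ ≤ L * ‖x - y‖) {ν : ℝ} {x y g : E}
    (hg : ‖g - gradient f y‖ ≤ ν * ‖g‖) :
    ‖gradient f x‖ ≤ L * ‖x - y‖ + (1 + ν) * ‖g‖ := by
  calc ‖gradient f x‖ ≤ ‖gradient f x - gradient f y‖ + ‖gradient f y - g‖ + ‖g‖ := by
        have := norm_add₃_le (a := gradient f x - gradient f y) (b := gradient f y - g) (c := g)
        simpa using this
    _ ≤ L * ‖x - y‖ + ν * ‖g‖ + ‖g‖ := by
        gcongr
        · exact hlip x y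
        · rwa [norm_sub_rev]
    _ = L * ‖x - y‖ + (1 + ν) * ‖g‖ := by ring

theorem igdm_step_energy_le (hf : Differentiable ℝ f)
    (hlip : ∀ x y, ‖gradient f x - gradient f y‖ ≤ L * ‖x - y‖) (hL : 0 ≤ L)
    {τ ν β γ δ : ℝ} (hτ : 0 ≤ τ) (hν : 0 ≤ ν) (hδ : |β - γ| ≤ δ)
    {x₀ x₁ x₂ xin xex g : E} (hin : xin = x₁ + β • (x₁ - x₀)) (hex : xex = x₁ + γ • (x₁ - x₀))
    (hnext : x₂ = xin - τ • g) (hg : ‖g - gradient f xex‖ ≤ ν * ‖g‖) :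
    2 * τ * f x₂ + (1 - ν - L * τ * δ) * ‖x₂ - x₁‖ ^ 2 + τ ^ 2 * (1 - ν - L * τ) * ‖g‖ ^ 2
      ≤ 2 * τ * f x₁ + (L * τ * δ + (L * τ + 1) * β ^ 2) * ‖x₁ - x₀‖ ^ 2 := by
  set d := x₁ - x₀
  set e := x₂ - x₁
  have he : e = β • d - τ • g := by simp only [e, hnext, hin]; abel
  have hin_sq : ‖xin - x₁‖ ^ 2 = β ^ 2 * ‖d‖ ^ 2 := by
    rw [hin, add_sub_cancel_left, norm_smul, mul_pow, Real.norm_eq_abs, sq_abs]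
  have hnext_sq : ‖x₂ - xin‖ ^ 2 = τ ^ 2 * ‖g‖ ^ 2 := by
    rw [hnext, sub_sub_cancel_left, norm_neg, norm_smul, mul_pow, Real.norm_eq_abs, sq_abs]
  have hdescent := le_add_inner_gradient_add_norm_sq hf hlip x₁ xin x₂
  rw [hin_sq, hnext_sq] at hdescent
  have hgrad : ‖gradient f xin - g‖ ≤ L * δ * ‖d‖ + ν * ‖g‖ := by
    have hsep : ‖xin - xex‖ = |β - γ| * ‖d‖ := by
      rw [hin, hex, add_sub_add_left_eq_sub, ← sub_smul, norm_smul, Real.norm_eq_abs]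
    calc ‖gradient f xin - g‖ ≤ ‖gradient f xin - gradient f xex‖ + ‖gradient f xex - g‖ :=
          norm_sub_le_norm_sub_add_norm_sub _ _ _
      _ ≤ L * (|β - γ| * ‖d‖) + ν * ‖g‖ := by
          rw [← hsep, norm_sub_rev _ g]; exact add_le_add (hlip _ _) hg
      _ ≤ L * δ * ‖d‖ + ν * ‖g‖ := by rw [mul_assoc L δ]; gcongr
  have hinner : ⟪gradient f xin, e⟫ ≤ ⟪g, e⟫ + (L * δ * ‖d‖ + ν * ‖g‖) * ‖e‖ := by
    calc ⟪gradient f xin, e⟫ = ⟪g, e⟫ + ⟪gradient f xin - g, e⟫ := by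
          rw [inner_sub_left]; ring
      _ ≤ ⟪g, e⟫ + (L * δ * ‖d‖ + ν * ‖g‖) * ‖e‖ := by
          gcongr; exact (real_inner_le_norm _ _).trans (by gcongr)
  -- `τ • g = β • d - e`, so the cross term is a difference of squared norms
  have hpolar : 2 * τ * ⟪g, e⟫ = β ^ 2 * ‖d‖ ^ 2 - τ ^ 2 * ‖g‖ ^ 2 - ‖e‖ ^ 2 := by
    have h := norm_sub_sq_real (β • d) (τ • g)
    rw [← he, norm_smul, norm_smul, real_inner_smul_left, real_inner_smul_right, mul_pow, mul_pow,
      Real.norm_eq_abs, Real.norm_eq_abs, sq_abs, sq_abs] at h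
    have hge : ⟪g, e⟫ = β * ⟪d, g⟫ - τ * ‖g‖ ^ 2 := by
      rw [he, inner_sub_right, real_inner_smul_right, real_inner_smul_right,
        real_inner_self_eq_norm_sq, real_inner_comm]
    rw [hge]
    linarith
  have hδ0 : 0 ≤ δ := (abs_nonneg _).trans hδ
  have amgm_d : 2 * τ * (L * δ * ‖d‖ * ‖e‖) ≤ L * τ * δ * (‖d‖ ^ 2 + ‖e‖ ^ 2) := by
    nlinarith [mul_nonneg (mul_nonneg (mul_nonneg hL hτ) hδ0) (sq_nonneg (‖d‖ - ‖e‖))]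
  have amgm_g : 2 * τ * (ν * ‖g‖ * ‖e‖) ≤ ν * (τ ^ 2 * ‖g‖ ^ 2 + ‖e‖ ^ 2) := by
    nlinarith [mul_nonneg hν (sq_nonneg (τ * ‖g‖ - ‖e‖))]
  have h2τ : 0 ≤ 2 * τ := by positivity
  linarith [mul_le_mul_of_nonneg_left hdescent h2τ, mul_le_mul_of_nonneg_left hinner h2τ]

structure IsIGDmIterates (f : E → ℝ) (τ ν : ℝ) (β γ : ℕ → ℝ) (x xin xex g : ℕ → E) : Prop where
  inertial : ∀ k, 1 ≤ k → xin k = x k + β k • (x k - x (k - 1))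
  extrapolated : ∀ k, 1 ≤ k → xex k = x k + γ k • (x k - x (k - 1))
  update : ∀ k, 1 ≤ k → x (k + 1) = xin k - τ • g k
  relative_error : ∀ k, 1 ≤ k → ‖g k - gradient f (xex k)‖ ≤ ν * ‖g k‖

theorem IsIGDmIterates.tendsto_norm_zero {τ ν βbar δbar : ℝ} {β γ : ℕ → ℝ} {x xin xex g : ℕ → E}
    (hx : IsIGDmIterates f τ ν β γ x xin xex g) (hf : Differentiable ℝ f)
    (hlip : ∀ x y, ‖gradient f x - gradient f y‖ ≤ L * ‖x - y‖) (hL : 0 ≤ L)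
    (hτ : 0 < τ) (hν : 0 ≤ ν) (hβ : ∀ k, 0 ≤ β k) (hβbar : ∀ k, β k ≤ βbar)
    (hδbar : ∀ k, |β k - γ k| ≤ δbar)
    (hparam : max (L * τ) (2 * L * τ * δbar + (L * τ + 1) * βbar ^ 2) < 1 - ν)
    (hbdd : BddBelow (range fun k => f (x k))) :
    Tendsto (fun k => ‖g (k + 1)‖) atTop (𝓝 0) ∧
      Tendsto (fun k => ‖x (k + 1) - x k‖) atTop (𝓝 0) := by
  obtain ⟨hLτ, hparam⟩ := max_lt_iff.1 hparam
  obtain ⟨m, hm⟩ := hbdd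
  have hδ0 : 0 ≤ δbar := (abs_nonneg _).trans (hδbar 0)
  have hLτδ : 0 ≤ L * τ * δbar := by positivity
  set S := 1 - ν - L * τ * δbar
  set ρ := τ ^ 2 * (1 - ν - L * τ)
  set η := 1 - ν - 2 * L * τ * δbar - (L * τ + 1) * βbar ^ 2
  have hρ : 0 < ρ := mul_pos (by positivity) (by linarith)
  have hη : 0 < η := by linarith
  have hS : 0 ≤ S := by nlinarith [sq_nonneg βbar, mul_nonneg hL hτ.le]
  set H : ℕ → ℝ := fun k => 2 * τ * f (x (k + 1)) + S * ‖x (k + 1) - x k‖ ^ 2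
  set t : ℕ → ℝ := fun k => ρ * ‖g (k + 1)‖ ^ 2 + η * ‖x (k + 1) - x k‖ ^ 2
  have hdecrease : ∀ k, H (k + 1) + t k ≤ H k := fun k => by
    have hk : 1 ≤ k + 1 := le_add_self
    have hstep := igdm_step_energy_le hf hlip hL hτ.le hν (hδbar (k + 1)) (hx.inertial _ hk)
      (hx.extrapolated _ hk) (hx.update _ hk) (hx.relative_error _ hk)
    have hβsq : (L * τ + 1) * β (k + 1) ^ 2 * ‖x (k + 1) - x k‖ ^ 2
        ≤ (L * τ + 1) * βbar ^ 2 * ‖x (k + 1) - x k‖ ^ 2 := by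
      gcongr
      exacts [hβ _, hβbar _]
    simp only [Nat.add_sub_cancel] at hstep
    simp only [H, t]
    linarith
  have hH : BddBelow (range H) := ⟨2 * τ * m, forall_mem_range.2 fun k => by
    have hfm : m ≤ f (x (k + 1)) := hm (mem_range_self _)
    have hS' : 0 ≤ S * ‖x (k + 1) - x k‖ ^ 2 := by positivity
    simp only [H]
    nlinarith⟩
  have ht := tendsto_zero_of_add_le_of_bddBelow hdecrease (fun k => by positivity) hH
  exact ⟨tendsto_zero_of_mul_sq_le hρ (fun k => le_add_of_nonneg_right (by positivity)) ht,
    tendsto_zero_of_mul_sq_le hη (fun k => le_add_of_nonneg_left (by positivity)) ht⟩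

end

theorem IGDm_global_gradient_to_zero_general {n : ℕ}
    (f : EuclideanSpace ℝ (Fin n) → ℝ)
    (hdiff : Differentiable ℝ f)
    (L : ℝ) (hL : 0 < L)
    (hlip : ∀ x y : EuclideanSpace ℝ (Fin n),
      ‖gradient f x - gradient f y‖ ≤ L * ‖x - y‖)
    (τ ν βbar δbar : ℝ) (hτ : 0 < τ) (hν : ν ∈ Set.Ioo (0:ℝ) 1)
    (β γ : ℕ → ℝ) (hβnn : ∀ k, 0 ≤ β k) (hγnn : ∀ k, 0 ≤ γ k)
    (hβbar : ∀ k, β k ≤ βbar)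
    (hδbar : ∀ k, |β k - γ k| ≤ δbar)
    (x xin xex g : ℕ → EuclideanSpace ℝ (Fin n))
    (hxin : ∀ k, 1 ≤ k → xin k = x k + β k • (x k - x (k-1)))
    (hxex : ∀ k, 1 ≤ k → xex k = x k + γ k • (x k - x (k-1)))
    (hupd : ∀ k, 1 ≤ k → x (k+1) = xin k - τ • g k)
    (hg : ∀ k, 1 ≤ k → ‖g k - gradient f (xex k)‖ ≤ ν * ‖g k‖)
    (hparam : max (L*τ) (2*L*τ*δbar + (L*τ+1)*βbar^2) < 1 - ν)
    (hbdd : ∃ m : ℝ, ∀ k, m ≤ f (x k)) :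
    Tendsto (fun k => gradient f (x k)) atTop (nhds 0) := by
  obtain ⟨hg0, hdx0⟩ := IsIGDmIterates.tendsto_norm_zero ⟨hxin, hxex, hupd, hg⟩ hdiff hlip hL.le hτ
    hν.1.le hβnn hβbar hδbar hparam (hbdd.imp fun _ hm => forall_mem_range.2 hm)
  have hbound : ∀ k, ‖gradient f (x (k + 1))‖
      ≤ L * (βbar + δbar) * ‖x (k + 1) - x k‖ + (1 + ν) * ‖g (k + 1)‖ := fun k => by
    have hk : 1 ≤ k + 1 := le_add_self
    have hγ : γ (k + 1) ≤ βbar + δbar := by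
      linarith [neg_abs_le (β (k + 1) - γ (k + 1)), hδbar (k + 1), hβbar (k + 1)]
    have hsep : ‖x (k + 1) - xex (k + 1)‖ = γ (k + 1) * ‖x (k + 1) - x k‖ := by
      rw [hxex _ hk, sub_add_cancel_left, norm_neg, norm_smul, Real.norm_of_nonneg (hγnn _),
        Nat.add_sub_cancel]
    calc ‖gradient f (x (k + 1))‖
        ≤ L * ‖x (k + 1) - xex (k + 1)‖ + (1 + ν) * ‖g (k + 1)‖ :=
          norm_gradient_le_of_norm_sub_gradient_le hlip (hg _ hk)
      _ ≤ L * (βbar + δbar) * ‖x (k + 1) - x k‖ + (1 + ν) * ‖g (k + 1)‖ := by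
          rw [hsep, mul_assoc L]; gcongr
  rw [← tendsto_add_atTop_iff_nat 1, tendsto_zero_iff_norm_tendsto_zero]
  refine squeeze_zero (fun _ => norm_nonneg _) hbound ?_
  simpa using (hdx0.const_mul (L * (βbar + δbar))).add (hg0.const_mul (1 + ν))

/-- Global IGDm: for `f : ℝⁿ → ℝ` of class `C¹` with globally `L`-Lipschitz gradient,
under the stated parameter conditions and lower boundedness of `(f (xᵏ))`, the gradients
`∇f(xᵏ)` converge to `0`. -/
theorem IGDm_global_gradient_to_zero {n : ℕ}
    (f : EuclideanSpace ℝ (Fin n) → ℝ)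
    (hdiff : Differentiable ℝ f)
    (L : ℝ) (hL : 0 < L)
    (hlip : ∀ x y : EuclideanSpace ℝ (Fin n),
      ‖gradient f x - gradient f y‖ ≤ L * ‖x - y‖)
    (τ ν βbar δbar : ℝ) (hτ : 0 < τ) (hν : ν ∈ Set.Ioo (0:ℝ) 1)
    (β γ : ℕ → ℝ) (hβnn : ∀ k, 0 ≤ β k) (hγnn : ∀ k, 0 ≤ γ k)
    (hβbar : ∀ k, β k ≤ βbar) (hβbar1 : βbar < 1)
    (hδbar : ∀ k, |β k - γ k| ≤ δbar)
    (x xin xex g : ℕ → EuclideanSpace ℝ (Fin n))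
    (hx01 : x 0 = x 1)
    (hxin : ∀ k, 1 ≤ k → xin k = x k + β k • (x k - x (k-1)))
    (hxex : ∀ k, 1 ≤ k → xex k = x k + γ k • (x k - x (k-1)))
    (hupd : ∀ k, 1 ≤ k → x (k+1) = xin k - τ • g k)
    (hg : ∀ k, 1 ≤ k → ‖g k - gradient f (xex k)‖ ≤ ν * ‖g k‖)
    (hparam : max (L*τ) (2*L*τ*δbar + (L*τ+1)*βbar^2) < 1 - ν)
    (hbdd : ∃ m : ℝ, ∀ k, m ≤ f (x k)) :
    Tendsto (fun k => gradient f (x k)) atTop (nhds 0) :=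
  IGDm_global_gradient_to_zero_general f hdiff L hL hlip τ ν βbar δbar hτ hν β γ hβnn hγnn hβbar
    hδbar x xin xex g hxin hxex hupd hg hparam hbdd
end

section
/- Let f : ℝⁿ → ℝ be differentiable with L-Lipschitz gradient on an open convex set X ⊆ ℝⁿ, let ν ∈ (0,1), and let τ₂ > 0 satisfy Lτ₂ ≤ ν/(ν+1). Then for every x ∈ X with x − τ₂∇f(x) ∈ X, the extragradient direction g := ∇f(x − τ₂∇f(x)) satisfies the relative error bound ‖g − ∇f(x)‖ ≤ ν‖g‖. -/
open Set Filter

/-- The extragradient direction `g = ∇f(x - τ₂∇f(x))` satisfies the relative error bound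
`‖g - ∇f(x)‖ ≤ ν‖g‖` whenever `Lτ₂ ≤ ν/(ν+1)`. -/
theorem extragradient_relative_error {n : ℕ}
    (X : Set (EuclideanSpace ℝ (Fin n))) (hXopen : IsOpen X) (hXconv : Convex ℝ X)
    (f : EuclideanSpace ℝ (Fin n) → ℝ)
    (hdiff : ∀ x ∈ X, DifferentiableAt ℝ f x)
    (L : ℝ) (hL : 0 < L)
    (hlip : ∀ u ∈ X, ∀ v ∈ X, ‖gradient f u - gradient f v‖ ≤ L * ‖u - v‖)
    (ν : ℝ) (hν : ν ∈ Set.Ioo (0:ℝ) 1)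
    (τ₂ : ℝ) (hτ₂ : 0 < τ₂) (hτ₂L : L * τ₂ ≤ ν / (ν + 1)) :
    ∀ x ∈ X, x - τ₂ • gradient f x ∈ X →
      ‖gradient f (x - τ₂ • gradient f x) - gradient f x‖ ≤
        ν * ‖gradient f (x - τ₂ • gradient f x)‖ := by
  intro x hx hy
  set d := gradient f x with hd
  set g := gradient f (x - τ₂ • d) with hg
  have h1 : ‖g - d‖ ≤ L * ‖(x - τ₂ • d) - x‖ := hlip _ hy _ hx
  have h2 : ‖(x - τ₂ • d) - x‖ = τ₂ * ‖d‖ := by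
    rw [sub_sub_cancel_left, norm_neg, norm_smul, Real.norm_eq_abs,
      abs_of_pos hτ₂]
  rw [h2] at h1
  have h3 : ‖d‖ ≤ ‖g‖ + ‖g - d‖ := by
    have := norm_sub_norm_le g d
    linarith [abs_le.mp (abs_norm_sub_norm_le g d)]
  have hν0 := hν.1
  have hν1 := hν.2
  have hpos : (0:ℝ) < ν + 1 := by linarith
  have hLτ : L * τ₂ * (ν + 1) ≤ ν := by
    have := (le_div_iff₀ hpos).mp hτ₂L
    linarith
  have hLτ2 : 0 ≤ L * τ₂ := le_of_lt (mul_pos hL hτ₂)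
  have h4 : ‖g - d‖ ≤ L * τ₂ * (‖g‖ + ‖g - d‖) := by
    calc ‖g - d‖ ≤ L * τ₂ * ‖d‖ := by linarith [mul_le_mul_of_nonneg_left (le_refl ‖d‖) hLτ2]
    _ ≤ L * τ₂ * (‖g‖ + ‖g - d‖) := by
        exact mul_le_mul_of_nonneg_left h3 hLτ2
  nlinarith [norm_nonneg (g - d), norm_nonneg g, mul_le_mul_of_nonneg_right hLτ (norm_nonneg (g-d)), mul_le_mul_of_nonneg_right hLτ (norm_nonneg g)]
end

section
/- Let f : ℝⁿ → ℝ be differentiable with L-Lipschitz gradient on an open convex set X ⊆ ℝⁿ, let ν ∈ (0,1), and let τ₂ > 0 satisfy Lτ₂ ≤ ν/(ν+1). Then for every x ∈ X with x + τ₂∇f(x) ∈ X, the sharpness-aware-minimization direction g := ∇f(x + τ₂∇f(x)) satisfies the relative error bound ‖g − ∇f(x)‖ ≤ ν‖g‖. -/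
open Set Filter

/-- The sharpness-aware-minimization direction `g = ∇f(x + τ₂∇f(x))` satisfies the relative error bound
`‖g - ∇f(x)‖ ≤ ν‖g‖` whenever `Lτ₂ ≤ ν/(ν+1)`. -/
theorem sam_relative_error {n : ℕ}
    (X : Set (EuclideanSpace ℝ (Fin n))) (hXopen : IsOpen X) (hXconv : Convex ℝ X)
    (f : EuclideanSpace ℝ (Fin n) → ℝ)
    (hdiff : ∀ x ∈ X, DifferentiableAt ℝ f x)
    (L : ℝ) (hL : 0 < L)
    (hlip : ∀ u ∈ X, ∀ v ∈ X, ‖gradient f u - gradient f v‖ ≤ L * ‖u - v‖)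
    (ν : ℝ) (hν : ν ∈ Set.Ioo (0:ℝ) 1)
    (τ₂ : ℝ) (hτ₂ : 0 < τ₂) (hτ₂L : L * τ₂ ≤ ν / (ν + 1)) :
    ∀ x ∈ X, x + τ₂ • gradient f x ∈ X →
      ‖gradient f (x + τ₂ • gradient f x) - gradient f x‖ ≤
        ν * ‖gradient f (x + τ₂ • gradient f x)‖ := by
  intro x hx hx'
  set h := gradient f x with hh
  set g := gradient f (x + τ₂ • h) with hg
  have key : ‖g - h‖ ≤ L * τ₂ * ‖h‖ := by
    have := hlip _ hx' _ hx
    have heq : x + τ₂ • h - x = τ₂ • h := by abel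
    rw [heq, norm_smul, Real.norm_eq_abs, abs_of_pos hτ₂] at this
    linarith [this]
  have hν0 : 0 < ν := hν.1
  have hν1 : 0 < ν + 1 := by linarith
  have hfrac : L * τ₂ * (ν + 1) ≤ ν := by
    calc L * τ₂ * (ν + 1) ≤ (ν / (ν + 1)) * (ν + 1) := by
          apply mul_le_mul_of_nonneg_right hτ₂L (le_of_lt hν1)
      _ = ν := by field_simp
  have htri : ‖h‖ ≤ ‖g‖ + ‖g - h‖ := by
    have h1 := norm_sub_norm_le h g
    have h2 : ‖h - g‖ = ‖g - h‖ := norm_sub_rev h g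
    linarith
  have hLτ : 0 ≤ L * τ₂ := by positivity
  -- ‖h‖ ≤ (ν+1)‖g‖
  have hbound : ‖h‖ ≤ (ν + 1) * ‖g‖ := by
    nlinarith [norm_nonneg h, norm_nonneg g, key, htri]
  calc ‖g - h‖ ≤ L * τ₂ * ‖h‖ := key
    _ ≤ L * τ₂ * ((ν + 1) * ‖g‖) := by
        apply mul_le_mul_of_nonneg_left hbound hLτ
    _ = (L * τ₂ * (ν + 1)) * ‖g‖ := by ring
    _ ≤ ν * ‖g‖ := mul_le_mul_of_nonneg_right hfrac (norm_nonneg g)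
end
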